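/- A code C ⊆ Rⁿ (a subset of Rⁿ) is cyclic, i.e., λ(C) = C where λ is the cyclic shift, if and only if its block Gray image Φ(C) ⊆ ((ZMod 2)ⁿ)³ is invariant under τ, i.e., τ(Φ(C)) = Φ(C), where τ applies the cyclic shift to each of the three blocks (that is, Φ(C) is a quasi-cyclic binary code of index 3 and length 3n). -/
import Mathlib


open Polynomial

noncomputable section

/-- The ring `R = F₂ + uF₂ + u²F₂` with `u³ = u`, realized as `(ZMod 2)[X] ⧸ ⟨X³ - X⟩`. -/
abbrev R : Type := Polynomial (ZMod 2) ⧸ Ideal.span ({X ^ 3 - X} : Set (Polynomial (ZMod 2)))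

/-- `u` is the residue class of `X` in `R`. -/
def u : R := Ideal.Quotient.mk _ (X : Polynomial (ZMod 2))

/-- The element `a + u·b + u²·c` of `R`. -/
def elt (a b c : ZMod 2) : R :=
  algebraMap (ZMod 2) R a + algebraMap (ZMod 2) R b * u + algebraMap (ZMod 2) R c * u ^ 2

/-- `Φ` is the Gray map: `Φ(a + u·b + u²·c) = (a, a + c, b)`. -/
def GraySpec (Φ : R → Fin 3 → ZMod 2) : Prop :=
  ∀ a b c : ZMod 2, Φ (elt a b c) = ![a, a + c, b]

/-- The cyclic shift `λ(c₀, c₁, …, c_{n-1}) = (c_{n-1}, c₀, …, c_{n-2})`. -/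
def cshift {α : Type*} {n : ℕ} [NeZero n] (c : Fin n → α) : Fin n → α :=
  fun i => c (i - 1)

/-- The block Gray map `Rⁿ → ((ZMod 2)ⁿ)³` sending `(aᵢ + u·bᵢ + u²·cᵢ)ᵢ` to the three
blocks `((aᵢ)ᵢ, (aᵢ + cᵢ)ᵢ, (bᵢ)ᵢ)`. -/
def blockGray (Φ : R → Fin 3 → ZMod 2) (n : ℕ) (x : Fin n → R) :
    Fin 3 → Fin n → ZMod 2 :=
  fun j i => Φ (x i) j

/-- `τ` applies the cyclic shift to each of the three blocks. -/
def tau {n : ℕ} [NeZero n] (v : Fin 3 → Fin n → ZMod 2) : Fin 3 → Fin n → ZMod 2 :=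
  fun j => cshift (v j)

lemma u_cube : u ^ 3 = u := by
  have h : Ideal.Quotient.mk (Ideal.span ({X ^ 3 - X} : Set (Polynomial (ZMod 2))))
      ((X : Polynomial (ZMod 2)) ^ 3 - X) = 0 :=
    Ideal.Quotient.eq_zero_iff_mem.mpr (Ideal.subset_span rfl)
  rw [map_sub, map_pow] at h
  have h' : (u ^ 3 - u : R) = 0 := h
  linear_combination h'

lemma elt_add (a b c a' b' c' : ZMod 2) :
    elt a b c + elt a' b' c' = elt (a + a') (b + b') (c + c') := by
  simp only [elt, map_add]; ring

lemma smul_elt (a a' b' c' : ZMod 2) :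
    algebraMap (ZMod 2) R a * elt a' b' c' = elt (a * a') (a * b') (a * c') := by
  simp only [elt, map_mul]; ring

lemma upow (m : ℕ) : ∃ a b c : ZMod 2, (u : R) ^ m = elt a b c := by
  induction m using Nat.strong_induction_on with
  | _ m ih =>
    match m with
    | 0 => exact ⟨1, 0, 0, by simp [elt]⟩
    | 1 => exact ⟨0, 1, 0, by simp [elt]⟩
    | 2 => exact ⟨0, 0, 1, by simp [elt]⟩
    | (m + 3) =>
      obtain ⟨a, b, c, h⟩ := ih (m + 1) (by omega)
      refine ⟨a, b, c, ?_⟩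
      calc (u : R) ^ (m + 3) = u ^ m * u ^ 3 := by ring
        _ = u ^ m * u := by rw [u_cube]
        _ = u ^ (m + 1) := by ring
        _ = elt a b c := h

lemma elt_surj (r : R) : ∃ a b c : ZMod 2, elt a b c = r := by
  obtain ⟨p, rfl⟩ := Ideal.Quotient.mk_surjective r
  induction p using Polynomial.induction_on' with
  | add p q hp hq =>
    obtain ⟨a, b, c, h1⟩ := hp
    obtain ⟨a', b', c', h2⟩ := hq
    exact ⟨a + a', b + b', c + c', by rw [← elt_add, h1, h2, map_add]⟩
  | monomial m a =>
    obtain ⟨a', b', c', h⟩ := upow m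
    refine ⟨a * a', a * b', a * c', ?_⟩
    rw [← smul_elt, ← h]
    rw [← Polynomial.C_mul_X_pow_eq_monomial, map_mul, map_pow]
    rfl

lemma graymap_inj (Φ : R → Fin 3 → ZMod 2) (hΦ : GraySpec Φ) :
    Function.Injective Φ := by
  intro r s h
  obtain ⟨a, b, c, rfl⟩ := elt_surj r
  obtain ⟨a', b', c', rfl⟩ := elt_surj s
  rw [hΦ, hΦ] at h
  have h0 := congrFun h 0
  have h1 := congrFun h 1
  have h2 := congrFun h 2
  simp at h0 h1 h2
  obtain rfl : a = a' := h0
  obtain rfl : b = b' := h2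
  obtain rfl : c = c' := by
    have := add_left_cancel h1
    exact this
  rfl

/-- A code `C ⊆ Rⁿ` is cyclic if and only if its block Gray image `Φ(C)` is invariant under
the blockwise cyclic shift `τ`, i.e. `Φ(C)` is a quasi-cyclic binary code of index `3`. -/
theorem cyclic_iff_grayImage_quasiCyclic (n : ℕ) [NeZero n]
    (Φ : R → Fin 3 → ZMod 2) (hΦ : GraySpec Φ) (C : Set (Fin n → R)) :
    cshift '' C = C ↔ tau '' (blockGray Φ n '' C) = blockGray Φ n '' C := by
  have hinj : Function.Injective (blockGray Φ n) := by
    intro x y h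
    funext i
    apply graymap_inj Φ hΦ
    funext j
    exact congrFun (congrFun h j) i
  have key : tau '' (blockGray Φ n '' C) = blockGray Φ n '' (cshift '' C) := by
    rw [Set.image_image, Set.image_image]; rfl
  rw [key, Set.image_eq_image hinj]

end
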